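/- arXiv:2106.07216 — 3 statements merged into one kernel-verified Lean document; each statement's English description precedes it below -/
import Mathlib

section
/- Let b, c ∈ ℝ and δ ∈ (0, 1/2], and let A ≥ 0. Suppose the quadratic polynomial q(τ) = bτ² − cτ satisfies q(τ) ≤ 0 for all τ with τ² ≥ (1−2δ)A. Then b ≤ 0, and if b = 0 then c = 0; moreover c² ≤ b²·A·(1−2δ), and for all τ ∈ ℝ: bτ² − cτ − (b/2)(τ² − A) ≤ b·A·δ. Equivalently, τ·(2bτ − 2c)/2 − (b/2)(τ²−A) ≤ bAδ ≤ 0 when b ≤ 0. -/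
set_option maxHeartbeats 1600000 in
/-- Algebraic core of Lemma 4.3: if the quadratic `q(τ) = bτ² − cτ` is non-positive
for all `τ` with `τ² ≥ (1−2δ)A`, then `b ≤ 0`, `b = 0 → c = 0`, `c² ≤ b²A(1−2δ)`,
and `bτ² − cτ − (b/2)(τ² − A) ≤ bAδ` for all `τ`. -/
theorem quadratic_time_function_estimate
    (b c δ A : ℝ) (hδ0 : 0 < δ) (hδ : δ ≤ 1 / 2) (hA : 0 ≤ A)
    (hq : ∀ τ : ℝ, (1 - 2 * δ) * A ≤ τ ^ 2 → b * τ ^ 2 - c * τ ≤ 0) :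
    b ≤ 0 ∧ (b = 0 → c = 0) ∧ c ^ 2 ≤ b ^ 2 * A * (1 - 2 * δ) ∧
    ∀ τ : ℝ, b * τ ^ 2 - c * τ - (b / 2) * (τ ^ 2 - A) ≤ b * A * δ := by
  obtain ⟨s, hs_def⟩ : ∃ s : ℝ, s = (1 - 2 * δ) * A := ⟨_, rfl⟩
  rw [← hs_def] at hq
  have hs : (0:ℝ) ≤ s := by rw [hs_def]; exact mul_nonneg (by linarith) hA
  have hsq : (Real.sqrt s) ^ 2 = s := Real.sq_sqrt hs
  have hsnn : 0 ≤ Real.sqrt s := Real.sqrt_nonneg s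
  -- b ≤ 0
  have hb : b ≤ 0 := by
    by_contra h
    push_neg at h
    obtain ⟨T, hT0, hT1, hT2⟩ : ∃ T : ℝ, 0 < T ∧ Real.sqrt s ≤ T ∧ c < b * T := by
      have hdp : 0 < (|c| + 1) / b := div_pos (by positivity) h
      refine ⟨Real.sqrt s + (|c| + 1) / b, by linarith, by linarith, ?_⟩
      have hbd : b * ((|c| + 1) / b) = |c| + 1 := by field_simp
      nlinarith [le_abs_self c]
    have hTsq : s ≤ T ^ 2 := by nlinarith
    have hqT := hq T hTsq
    nlinarith [mul_pos hT0 (sub_pos.2 hT2)]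
  -- b = 0 → c = 0
  have hbc : b = 0 → c = 0 := by
    intro hb0
    have hT0 : (0:ℝ) < Real.sqrt s + 1 := by linarith
    have hTsq : s ≤ (Real.sqrt s + 1) ^ 2 := by nlinarith
    have h1 := hq (Real.sqrt s + 1) hTsq
    have h2 := hq (-(Real.sqrt s + 1)) (by nlinarith)
    rw [hb0] at h1 h2
    nlinarith
  -- c² ≤ b² s
  have hc2 : c ^ 2 ≤ b ^ 2 * s := by
    rcases hb.lt_or_eq with hb' | hb'
    · by_contra hlt
      push_neg at hlt
      rcases hs.lt_or_eq with hspos | hs0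
      · -- s > 0
        have hb2s : 0 < b ^ 2 * s := mul_pos (by nlinarith) hspos
        have hc0 : c ≠ 0 := by intro h0; rw [h0] at hlt; nlinarith
        have hspos' : 0 < Real.sqrt s := by nlinarith
        rcases lt_or_gt_of_ne hc0 with hcneg | hcpos
        · -- c < 0 : use τ = √s
          have hkey : -b * Real.sqrt s < -c := by nlinarith
          have := hq (Real.sqrt s) (by rw [hsq])
          nlinarith
        · -- c > 0 : use τ = -√s
          have hkey : -b * Real.sqrt s < c := by nlinarith
          have := hq (-(Real.sqrt s)) (by nlinarith)
          nlinarith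
      · -- s = 0
        have hc0 : c ≠ 0 := by intro h0; rw [h0] at hlt; nlinarith
        have hτ := hq (c / (2 * b)) (by nlinarith [sq_nonneg (c / (2 * b))])
        have hb0 : b ≠ 0 := ne_of_lt hb'
        have hexp : b * (c / (2 * b)) ^ 2 - c * (c / (2 * b)) = -(c ^ 2) / (4 * b) := by
          field_simp; ring
        rw [hexp] at hτ
        have hcpos : 0 < c ^ 2 := by positivity
        have : -(c ^ 2) / (4 * b) > 0 := by
          apply div_pos_of_neg_of_neg <;> nlinarith
        linarith
    · have hc0 : c = 0 := hbc hb'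
      rw [hc0, hb']
      simp
  have hc2' : c ^ 2 ≤ b ^ 2 * A * (1 - 2 * δ) := by
    have heq : b ^ 2 * s = b ^ 2 * A * (1 - 2 * δ) := by rw [hs_def]; ring
    linarith
  refine ⟨hb, hbc, hc2', ?_⟩
  intro τ
  rcases hb.lt_or_eq with hb' | hb'
  · have hAs : b * A * δ = b * A / 2 - b * s / 2 := by rw [hs_def]; ring
    rw [hAs]
    have h2b : (0:ℝ) < -(2 * b) := by linarith
    have hid : -(2 * b) * (c * τ - b / 2 * τ ^ 2 - b / 2 * s)
        = (b * τ - c) ^ 2 + (b ^ 2 * s - c ^ 2) := by ring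
    have h1 : -(2 * b) * 0 ≤ -(2 * b) * (c * τ - b / 2 * τ ^ 2 - b / 2 * s) := by
      rw [hid, mul_zero]
      have := sq_nonneg (b * τ - c)
      linarith
    have hX := le_of_mul_le_mul_left h1 h2b
    linarith
  · have hc0 : c = 0 := hbc hb'
    rw [hc0, hb']
    ring_nf
    simp
end

section
/- Let Γ : K → 𝒫(ℝⁿ) assign to each point m of a metric space K a closed convex cone Γ_m ⊆ ℝⁿ, and suppose there is c > 0 and a linear functional T on ℝⁿ such that every v ∈ Γ_m satisfies ‖v‖ ≤ c·T(v). Let γ_n : [0,1] → K ⊆ ℝᴺ be a sequence of uniformly Lipschitz curves with derivatives γ_n'(s) ∈ Γ_{γ_n(s)} a.e., converging uniformly to γ. If the assignment m ↦ Γ_m is inner semi-continuous in the sense that limits of vectors v_n ∈ Γ_{m_n} with m_n → m lie in Γ_m, and each Γ_m is closed and convex, then γ is Lipschitz and γ'(s) ∈ Γ_{γ(s)} for a.e. s. -/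
/-!
Fix `s` where `γ` is differentiable; `γ'(s)` is the limit of the slopes of `γ` on `[s, y]` as
`y ↓ s`, and each of these is the limit of the slopes of `γₙ` on `[s, y]`. Since Lipschitz
functions satisfy the fundamental theorem of calculus, Hahn–Banach separation puts the slope of
`γₙ` on `[s, y]` in every closed convex set containing `γₙ'` a.e. on `[s, y]`. For `y` close to
`s` and `n` large, `γₙ` stays close to `γ(s)` on `[s, y]`, and `‖γₙ'‖ ≤ L`; inner
semi-continuity and compactness of balls then put `γₙ'` in the `ε`-neighbourhood of the convex
set `Γ_{γ(s)}`. Letting `y ↓ s` and `ε → 0` gives `γ'(s) ∈ Γ_{γ(s)}`.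
-/

open Filter Topology MeasureTheory Set Metric

theorem LipschitzOnWith.of_tendsto {α β ι : Type*} [PseudoEMetricSpace α] [PseudoMetricSpace β]
    {l : Filter ι} [l.NeBot] {F : ι → α → β} {f : α → β} {K : NNReal} {s : Set α}
    (hF : ∀ i, LipschitzOnWith K (F i) s) (hlim : ∀ x ∈ s, Tendsto (F · x) l (𝓝 (f x))) :
    LipschitzOnWith K f s := fun x hx y hy =>
  le_of_tendsto ((hlim x hx).edist (hlim y hy)) (Eventually.of_forall fun i => hF i hx hy)

theorem LipschitzOnWith.sub_le_mul_of_ae_hasDerivAt_le {f : ℝ → ℝ} {K : NNReal} {a b C : ℝ}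
    (hab : a ≤ b) (hf : LipschitzOnWith K f (Icc a b))
    (hf' : ∀ᵐ t ∂volume.restrict (Icc a b), ∃ d, HasDerivAt f d t ∧ d ≤ C) :
    f b - f a ≤ C * (b - a) := by
  have hac := (uIcc_of_le hab ▸ hf).absolutelyContinuousOnInterval
  calc f b - f a = ∫ t in a..b, deriv f t := hac.integral_deriv_eq_sub.symm
    _ ≤ ∫ _ in a..b, C := by
      refine intervalIntegral.integral_mono_ae_restrict hab hac.intervalIntegrable_deriv
        intervalIntegrable_const ?_
      filter_upwards [hf'] with t ⟨d, hd, hdC⟩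
      exact hd.deriv ▸ hdC
    _ = C * (b - a) := by simp [mul_comm]

section

variable {E : Type*} [NormedAddCommGroup E]

theorem eventually_inter_closedBall_subset_cthickening [ProperSpace E] {Γ : E → Set E}
    (hΓ : IsClosed {p : E × E | p.2 ∈ Γ p.1}) (m₀ : E) (R : ℝ) {ε : ℝ} (hε : 0 < ε) :
    ∀ᶠ m in 𝓝 m₀, Γ m ∩ closedBall 0 R ⊆ cthickening ε (Γ m₀) := by
  by_contra h
  obtain ⟨mseq, hmseq, hbad⟩ := exists_seq_forall_of_frequently (not_eventually.mp h)
  have hbad' : ∀ k, ∃ v ∈ Γ (mseq k) ∩ closedBall 0 R, v ∉ cthickening ε (Γ m₀) :=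
    fun k => not_subset.mp (hbad k)
  choose vseq hvΓR hvε using hbad'
  obtain ⟨v, -, φ, hφ, hvφ⟩ := (isCompact_closedBall (0 : E) R).tendsto_subseq fun k => (hvΓR k).2
  have hv : v ∈ Γ m₀ := hΓ.mem_of_tendsto ((hmseq.comp hφ.tendsto_atTop).prodMk_nhds hvφ)
    (Eventually.of_forall fun k => (hvΓR (φ k)).1)
  obtain ⟨k, hk⟩ := (hvφ.eventually (isOpen_thickening.mem_nhds
    (self_subset_thickening hε _ hv))).exists
  exact hvε (φ k) (thickening_subset_cthickening ε _ hk)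

variable [NormedSpace ℝ E]

theorem LipschitzOnWith.slope_mem_of_ae_hasDerivAt_mem {f : ℝ → E} {K : NNReal} {a b : ℝ}
    {S : Set E} (hab : a < b) (hf : LipschitzOnWith K f (Icc a b)) (hS : Convex ℝ S)
    (hSc : IsClosed S) (hf' : ∀ᵐ t ∂volume.restrict (Icc a b), ∃ d, HasDerivAt f d t ∧ d ∈ S) :
    slope f a b ∈ S := by
  by_contra hnot
  obtain ⟨φ, u, hφS, hφslope⟩ := geometric_hahn_banach_closed_point hS hSc hnot
  have hφf : φ (f b) - φ (f a) ≤ u * (b - a) := by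
    refine (φ.lipschitz.comp_lipschitzOnWith hf).sub_le_mul_of_ae_hasDerivAt_le hab.le ?_
    filter_upwards [hf'] with t ⟨d, hd, hdS⟩
    exact ⟨φ d, φ.hasFDerivAt.comp_hasDerivAt t hd, (hφS d hdS).le⟩
  rw [slope_def_module, map_smul, map_sub, smul_eq_mul, inv_mul_eq_div,
    lt_div_iff₀ (sub_pos.2 hab)] at hφslope
  linarith

theorem eventually_slope_mem_cthickening [ProperSpace E] {ι : Type*} {Γ : E → Set E}
    (hconvex : ∀ m, Convex ℝ (Γ m)) (hΓ : IsClosed {p : E × E | p.2 ∈ Γ p.1})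
    {l : Filter ι} [l.NeBot] {L : NNReal} {a b : ℝ} {γn : ι → ℝ → E} {γ : ℝ → E}
    (hγnLip : ∀ n, LipschitzOnWith L (γn n) (Icc a b))
    (hγn' : ∀ n, ∀ᵐ t ∂volume.restrict (Icc a b), ∃ d, HasDerivAt (γn n) d t ∧ d ∈ Γ (γn n t))
    (hconv : TendstoUniformlyOn γn γ l (Icc a b)) {s : ℝ} (hs : s ∈ Ico a b)
    {ε : ℝ} (hε : 0 < ε) :
    ∀ᶠ y in 𝓝[>] s, slope γ s y ∈ cthickening ε (Γ (γ s)) := by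
  obtain ⟨δ, hδ, hΓδ⟩ := eventually_nhds_iff_ball.mp
    (eventually_inter_closedBall_subset_cthickening hΓ (γ s) L hε)
  have hγcont : ContinuousOn γ (Icc a b) :=
    hconv.continuousOn (Frequently.of_forall fun n => (hγnLip n).continuousOn)
  obtain ⟨η, hη, hγη⟩ := continuousWithinAt_iff.mp (hγcont s (Ico_subset_Icc_self hs))
    (δ / 2) (half_pos hδ)
  filter_upwards [Ioo_mem_nhdsGT (lt_min hs.2 (lt_add_of_pos_right s hη))] with y hy
  have hyb : y ≤ b := hy.2.le.trans (min_le_left _ _)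
  have hsub : Icc s y ⊆ Icc a b := Icc_subset_Icc hs.1 hyb
  have hslope : Tendsto (fun n => slope (γn n) s y) l (𝓝 (slope γ s y)) := by
    simp only [slope_def_module]
    exact ((hconv.tendsto_at (hsub (right_mem_Icc.mpr hy.1.le))).sub
      (hconv.tendsto_at (hsub (left_mem_Icc.mpr hy.1.le)))).const_smul _
  refine isClosed_cthickening.mem_of_tendsto hslope ?_
  filter_upwards [tendstoUniformlyOn_iff.mp hconv (δ / 2) (half_pos hδ)] with n hn
  refine ((hγnLip n).mono hsub).slope_mem_of_ae_hasDerivAt_mem hy.1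
    ((hconvex _).cthickening ε) isClosed_cthickening ?_
  have hIoo : ∀ᵐ t ∂volume.restrict (Icc s y), t ∈ Ioo s y := by
    rw [← Measure.restrict_congr_set Ioo_ae_eq_Icc]
    exact ae_restrict_mem measurableSet_Ioo
  filter_upwards [ae_restrict_of_ae_restrict_of_subset hsub (hγn' n), hIoo]
    with t ⟨d, hd, hdΓ⟩ ht
  have htab : t ∈ Ioo a b := ⟨hs.1.trans_lt ht.1, ht.2.trans_le hyb⟩
  have hdL : ‖d‖ ≤ L := hd.le_of_lipschitzOn (Icc_mem_nhds htab.1 htab.2) (hγnLip n)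
  have hγnt : dist (γn n t) (γ s) < δ :=
    calc dist (γn n t) (γ s) ≤ dist (γ t) (γn n t) + dist (γ t) (γ s) :=
          dist_triangle_left _ _ _
      _ < δ / 2 + δ / 2 := by
        gcongr
        · exact hn t (Ioo_subset_Icc_self htab)
        · refine hγη (Ioo_subset_Icc_self htab) ?_
          rw [Real.dist_eq, abs_of_pos (sub_pos.mpr ht.1)]
          linarith [ht.2, hy.2.trans_le (min_le_right _ _)]
      _ = δ := add_halves δ
  exact ⟨d, hd, hΓδ _ hγnt ⟨hdΓ, mem_closedBall_zero_iff.mpr hdL⟩⟩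

end

theorem limit_of_rays_is_ray_general
    (N : ℕ)
    (Γ : EuclideanSpace ℝ (Fin N) → Set (EuclideanSpace ℝ (Fin N)))
    (hclosed : ∀ m, IsClosed (Γ m))
    (hconvex : ∀ m, Convex ℝ (Γ m))
    (hisc : ∀ (m : EuclideanSpace ℝ (Fin N)) (mseq vseq : ℕ → EuclideanSpace ℝ (Fin N))
      (v : EuclideanSpace ℝ (Fin N)), Tendsto mseq atTop (𝓝 m) →
      (∀ k, vseq k ∈ Γ (mseq k)) → Tendsto vseq atTop (𝓝 v) → v ∈ Γ m)
    (L : NNReal)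
    (γn : ℕ → ℝ → EuclideanSpace ℝ (Fin N))
    (hγnLip : ∀ n, LipschitzOnWith L (γn n) (Icc (0 : ℝ) 1))
    (hγn' : ∀ n, ∀ᵐ s ∂(volume.restrict (Icc (0 : ℝ) 1)),
      HasDerivAt (γn n) (deriv (γn n) s) s ∧ deriv (γn n) s ∈ Γ (γn n s))
    (γ : ℝ → EuclideanSpace ℝ (Fin N))
    (hconv : TendstoUniformlyOn γn γ atTop (Icc (0 : ℝ) 1)) :
    LipschitzOnWith L γ (Icc (0 : ℝ) 1) ∧
    ∀ᵐ s ∂(volume.restrict (Icc (0 : ℝ) 1)),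
      ∀ v, HasDerivAt γ v s → v ∈ Γ (γ s) := by
  refine ⟨.of_tendsto hγnLip fun x hx => hconv.tendsto_at hx, ?_⟩
  have hgraph : IsClosed {p : _ × _ | p.2 ∈ Γ p.1} := IsSeqClosed.isClosed fun _ _ hp hlim =>
    hisc _ _ _ _ ((continuous_fst.tendsto _).comp hlim) hp ((continuous_snd.tendsto _).comp hlim)
  -- only slopes from the right are used, so the endpoint `1` is discarded
  rw [← Measure.restrict_congr_set Ico_ae_eq_Icc]
  filter_upwards [ae_restrict_mem measurableSet_Ico] with s hs v hv
  have hslope : Tendsto (slope γ s) (𝓝[>] s) (𝓝 v) :=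
    (hasDerivAt_iff_tendsto_slope.mp hv).mono_left (nhdsGT_le_nhdsNE s)
  have hthick (ε : ℝ) (hε : 0 < ε) : v ∈ cthickening ε (Γ (γ s)) :=
    isClosed_cthickening.mem_of_tendsto hslope <| eventually_slope_mem_cthickening hconvex hgraph
      hγnLip (fun n => (hγn' n).mono fun _ ht => ⟨_, ht⟩) hconv hs hε
  rw [← (hclosed _).closure_eq, closure_eq_iInter_cthickening]
  exact mem_iInter₂.mpr hthick

/-- Closedness of rays (Lemma 4.2, item 1): a uniform limit of uniformly Lipschitz curves
tangent a.e. to an inner semi-continuous field of closed convex cones `Γ_m`, satisfying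
a uniform transversality bound `‖v‖ ≤ c·T(v)` on the cones, is Lipschitz and tangent
a.e. to the cones. -/
theorem limit_of_rays_is_ray
    (N : ℕ) (K : Set (EuclideanSpace ℝ (Fin N))) (hK : IsCompact K)
    (Γ : EuclideanSpace ℝ (Fin N) → Set (EuclideanSpace ℝ (Fin N)))
    (hclosed : ∀ m, IsClosed (Γ m))
    (hconvex : ∀ m, Convex ℝ (Γ m))
    (hcone : ∀ m, ∀ r : ℝ, 0 ≤ r → ∀ v ∈ Γ m, r • v ∈ Γ m)
    (c : ℝ) (hc : 0 < c)
    (T : EuclideanSpace ℝ (Fin N) →ₗ[ℝ] ℝ)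
    (hT : ∀ m, ∀ v ∈ Γ m, ‖v‖ ≤ c * T v)
    (hisc : ∀ (m : EuclideanSpace ℝ (Fin N)) (mseq vseq : ℕ → EuclideanSpace ℝ (Fin N))
      (v : EuclideanSpace ℝ (Fin N)), Tendsto mseq atTop (𝓝 m) →
      (∀ k, vseq k ∈ Γ (mseq k)) → Tendsto vseq atTop (𝓝 v) → v ∈ Γ m)
    (L : NNReal)
    (γn : ℕ → ℝ → EuclideanSpace ℝ (Fin N))
    (hγnK : ∀ n, ∀ s ∈ Icc (0 : ℝ) 1, γn n s ∈ K)
    (hγnLip : ∀ n, LipschitzOnWith L (γn n) (Icc (0 : ℝ) 1))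
    (hγn' : ∀ n, ∀ᵐ s ∂(volume.restrict (Icc (0 : ℝ) 1)),
      HasDerivAt (γn n) (deriv (γn n) s) s ∧ deriv (γn n) s ∈ Γ (γn n s))
    (γ : ℝ → EuclideanSpace ℝ (Fin N))
    (hconv : TendstoUniformlyOn γn γ atTop (Icc (0 : ℝ) 1)) :
    LipschitzOnWith L γ (Icc (0 : ℝ) 1) ∧
    ∀ᵐ s ∂(volume.restrict (Icc (0 : ℝ) 1)),
      ∀ v, HasDerivAt γ v s → v ∈ Γ (γ s) :=
  limit_of_rays_is_ray_general N Γ hclosed hconvex hisc L γn hγnLip hγn' γ hconv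
end

section
/- Let (W, ω) be a finite-dimensional symplectic vector space, Z_1, ..., Z_N vectors in ℝᵈ which are linearly independent, and suppose given independent vectors H_1, ..., H_N ∈ W and a surjective linear map dπ : W → ℝᵈ with dπ(H_j) = Z_j. Let a(v,w) = Σ_j ω(v,H_j)·ω(w,H_j) and let g be the quadratic form on span(Z_j) with the Z_j orthonormal. Then for every b = Σ u_j H_j ∈ span(H_1,...,H_N) = (ker a)^{⊥ω}, one has a*(ω(b,·)) = Σ u_j² = g(dπ(b)), where a*(μ) = sup_{η ∉ ker a} μ(η)²/a(η,η). -/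
/-- Lemma 5.4 in linear-algebraic form: with `a(v,w) = Σ_j ω(v,H_j)ω(w,H_j)`, `dπ(H_j)=Z_j`
and `g` making the `Z_j` orthonormal, for every `b = Σ u_j H_j ∈ (ker a)^{⊥ω}` one has
`a*(ω(b,·)) = Σ u_j² = g(dπ(b))`, where `a*(μ) = sup_{η ∉ ker a} μ(η)²/a(η,η)`. -/
theorem dual_hessian_equals_subriemannian_metric
    (W : Type*) [AddCommGroup W] [Module ℝ W] [FiniteDimensional ℝ W]
    (d N : ℕ)
    (ω : W →ₗ[ℝ] W →ₗ[ℝ] ℝ)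
    (hskew : ∀ x y, ω x y = -ω y x)
    (hnd : ∀ x, (∀ y, ω x y = 0) → x = 0)
    (Z : Fin N → EuclideanSpace ℝ (Fin d)) (hZind : LinearIndependent ℝ Z)
    (H : Fin N → W) (hHind : LinearIndependent ℝ H)
    (dπ : W →ₗ[ℝ] EuclideanSpace ℝ (Fin d)) (hsurj : Function.Surjective dπ)
    (hπH : ∀ j, dπ (H j) = Z j)
    (a : W → W → ℝ)
    (ha : ∀ v w, a v w = ∑ j, ω v (H j) * ω w (H j))
    (g : EuclideanSpace ℝ (Fin d) → ℝ)
    (hg : ∀ u : Fin N → ℝ, g (∑ j, u j • Z j) = ∑ j, (u j) ^ 2) :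
    ∀ u : Fin N → ℝ,
      sSup {r : ℝ | ∃ η, a η η ≠ 0 ∧ r = (ω (∑ j, u j • H j) η) ^ 2 / a η η}
          = ∑ j, (u j) ^ 2 ∧
      (∑ j, (u j) ^ 2) = g (dπ (∑ j, u j • H j)) := by
  intro u
  -- the g part
  have hgpart : (∑ j, (u j) ^ 2) = g (dπ (∑ j, u j • H j)) := by
    have : dπ (∑ j, u j • H j) = ∑ j, u j • Z j := by
      rw [map_sum]; simp [hπH]
    rw [this, hg]
  refine ⟨?_, hgpart⟩
  set b := ∑ j, u j • H j with hb
  have hωb : ∀ η, ω b η = ∑ j, u j * ω (H j) η := by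
    intro η
    simp [hb, map_sum, LinearMap.sum_apply, LinearMap.smul_apply, smul_eq_mul]
  -- the map v ↦ (ω v (H j))_j is surjective
  have hΦ : Function.Surjective
      (LinearMap.pi (fun j : Fin N => (ω.flip) (H j)) : W →ₗ[ℝ] (Fin N → ℝ)) := by
    rw [← LinearMap.dualMap_injective_iff]
    rw [← LinearMap.ker_eq_bot]
    rw [LinearMap.ker_eq_bot']
    intro φ hφ
    apply (Pi.basisFun ℝ (Fin N)).ext
    intro i
    by_contra hne
    -- φ = dot with c, c i = φ (e i)
    set c : Fin N → ℝ := fun j => φ (Pi.basisFun ℝ (Fin N) j) with hc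
    have hφx : ∀ x : Fin N → ℝ, φ x = ∑ j, x j * c j := by
      intro x
      have hx : x = ∑ j, x j • (Pi.basisFun ℝ (Fin N) j) := by
        simp [Pi.basisFun_apply]
        ext k
        simp [Finset.sum_apply, Pi.single_apply]
      calc φ x = φ (∑ j, x j • (Pi.basisFun ℝ (Fin N) j)) := by rw [← hx]
        _ = ∑ j, x j * c j := by rw [map_sum]; simp [hc, smul_eq_mul]
    have key : ∀ v : W, ω v (∑ j, c j • H j) = 0 := by
      intro v
      have := congrArg (fun ψ : Module.Dual ℝ W => ψ v) hφ
      simp only [LinearMap.dualMap_apply, LinearMap.comp_apply, LinearMap.zero_apply] at this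
      have h2 : φ ((LinearMap.pi fun j : Fin N => ω.flip (H j)) v) = 0 := this
      rw [hφx] at h2
      simp only [LinearMap.pi_apply, LinearMap.flip_apply] at h2
      rw [map_sum]
      simpa [smul_eq_mul, mul_comm] using h2
    have hzero : (∑ j, c j • H j) = 0 := by
      apply hnd
      intro y
      rw [hskew]
      rw [key y]
      ring
    have hc0 : ∀ j, c j = 0 := by
      have := linearIndependent_iff'.mp hHind Finset.univ c (by simpa using hzero)
      intro j; exact this j (Finset.mem_univ j)
    exact hne (by simpa [hc] using hc0 i)
  -- upper bound
  have hub : ∀ r ∈ {r : ℝ | ∃ η, a η η ≠ 0 ∧ r = (ω b η) ^ 2 / a η η},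
      r ≤ ∑ j, (u j) ^ 2 := by
    rintro r ⟨η, hη, rfl⟩
    have haη : a η η = ∑ j, (ω (H j) η) ^ 2 := by
      rw [ha]
      refine Finset.sum_congr rfl fun j _ => ?_
      rw [hskew η (H j)]
      ring
    have hpos : 0 < a η η := by
      rcases lt_or_eq_of_le (by rw [haη]; positivity : (0:ℝ) ≤ a η η) with h | h
      · exact h
      · exact absurd h.symm hη
    rw [div_le_iff₀ hpos, hωb, haη]
    calc (∑ j, u j * ω (H j) η) ^ 2
        ≤ (∑ j, (u j) ^ 2) * ∑ j, (ω (H j) η) ^ 2 :=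
          Finset.sum_mul_sq_le_sq_mul_sq _ _ _
      _ = _ := by rw [← haη]
  by_cases hu : ∀ j, u j = 0
  · -- degenerate case: set is empty or {0}
    have hb0 : b = 0 := by simp [hb, hu]
    have hsub : {r : ℝ | ∃ η, a η η ≠ 0 ∧ r = (ω b η) ^ 2 / a η η} ⊆ {0} := by
      rintro r ⟨η, hη, rfl⟩
      simp [hb0]
    have hsum0 : (∑ j, (u j) ^ 2) = 0 := by simp [hu]
    rw [hsum0]
    rcases Set.subset_singleton_iff_eq.mp hsub with h | h
    · rw [h, Real.sSup_empty]
    · rw [h, csSup_singleton]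
  · -- find η with ω η (H j) = u j
    push_neg at hu
    obtain ⟨j0, hj0⟩ := hu
    obtain ⟨η, hη⟩ := hΦ u
    have hηj : ∀ j, ω η (H j) = u j := by
      intro j
      have := congrFun hη j
      simpa [LinearMap.pi_apply, LinearMap.flip_apply] using this
    have hsumpos : 0 < ∑ j, (u j) ^ 2 := by
      have : (0:ℝ) < (u j0) ^ 2 := by positivity
      exact Finset.sum_pos' (fun j _ => sq_nonneg _) ⟨j0, Finset.mem_univ _, this⟩
    have haηη : a η η = ∑ j, (u j) ^ 2 := by
      rw [ha]
      refine Finset.sum_congr rfl fun j _ => ?_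
      rw [hηj]; ring
    have hmem : (∑ j, (u j) ^ 2) ∈
        {r : ℝ | ∃ η, a η η ≠ 0 ∧ r = (ω b η) ^ 2 / a η η} := by
      refine ⟨η, by rw [haηη]; exact ne_of_gt hsumpos, ?_⟩
      have hωbη : ω b η = -(∑ j, (u j) ^ 2) := by
        rw [hωb]
        rw [← Finset.sum_neg_distrib]
        refine Finset.sum_congr rfl fun j _ => ?_
        rw [hskew (H j) η, hηj]; ring
      rw [hωbη, haηη, neg_sq, sq, mul_div_assoc, div_self (ne_of_gt hsumpos), mul_one]
    refine le_antisymm (Real.sSup_le hub (le_of_lt hsumpos)) ?_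
    exact le_csSup ⟨∑ j, (u j) ^ 2, hub⟩ hmem
end
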